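/- arXiv:2202.04551 — 6 statements merged into one kernel-verified Lean document; each statement's English description precedes it below -/
import Mathlib

section
/- Let a finite rooted tree be given, with ℓ a leaf, and let w, w̃ : V⁰ → ℝ satisfy 0 ≤ w_u ≤ w̃_u and w̃_u > 0 for all u ∈ V⁰. Let x, δ ∈ K(T) with δ_u > 0 for all u, let λ : V → ℝ satisfy λ_u ≥ 0 for all u and λ_u = 0 for every leaf u, let s ≥ 0, and let x'_u for u ∈ V⁰∖{c_r} be given by the mirror-descent dynamic. Then for every real s_w with 0 ≤ s_w ≤ s, the instantaneous cost satisfies s_w·x_ℓ + Σ_{u ∈ V⁰∖{c_r}} w_u·|x'_u| ≤ 3·s·x_ℓ + 2·Σ_{u ∈ V⁰} λ_u·(x_u + δ_u). -/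
/-!
Since `w_u ≤ w̃_u`, each term `w_u |x'_u|` is at most the absolute value of the numerator of
`x'_u`, which the triangle inequality bounds by `2 s x_u 𝟙[u = ℓ] + (λ_{p_u} + λ_u) (x_u + δ_u)`.
Summing, the `λ_u` terms contribute at most `Σ_u λ_u (x_u + δ_u)`, and so do the `λ_{p_u}` terms:
grouping them by the parent `v = p_u`, flow conservation of `x + δ` at internal vertices turns
`λ_v Σ_{p_u = v} (x_u + δ_u)` into `λ_v (x_v + δ_v)`, while `λ_v = 0` at leaves.
-/

open Finset

section Tree

variable {V : Type*} [Fintype V] [DecidableEq V] (r : V) (p : V → V)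

def children (u : V) : Finset V := univ.filter (fun v => v ≠ r ∧ p v = u)

def IsLeaf (u : V) : Prop := u ≠ r ∧ ∀ v, v ≠ r → p v ≠ u

theorem sum_mul_parent_eq_sum_mul (μ y : V → ℝ) (hμ : ∀ u, IsLeaf r p u → μ u = 0)
    (hy : ∀ u, ¬IsLeaf r p u → ∑ v ∈ children r p u, y v = y u) :
    ∑ u ∈ univ.filter (fun u => u ≠ r ∧ p u ≠ r), μ (p u) * y u
      = ∑ v ∈ univ.filter (fun v => v ≠ r), μ v * y v := by
  have hmaps : ∀ u ∈ univ.filter (fun u => u ≠ r ∧ p u ≠ r), p u ∈ univ.filter (fun v => v ≠ r) :=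
    fun u hu => by simpa using (mem_filter.1 hu).2.2
  rw [← sum_fiberwise_of_maps_to hmaps]
  refine sum_congr rfl fun v hv => ?_
  have hfiber : (univ.filter (fun u => u ≠ r ∧ p u ≠ r)).filter (fun u => p u = v)
      = children r p v := by
    ext u
    simp only [children, mem_filter, mem_univ, true_and]
    constructor
    · rintro ⟨⟨hu, -⟩, rfl⟩
      exact ⟨hu, rfl⟩
    · rintro ⟨hu, rfl⟩
      exact ⟨⟨hu, (mem_filter.1 hv).2⟩, rfl⟩
  rw [hfiber, sum_congr rfl fun u hu => by rw [(mem_filter.1 hu).2.2], ← mul_sum]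
  by_cases hleaf : IsLeaf r p v
  · rw [hμ v hleaf, zero_mul, zero_mul]
  · rw [hy v hleaf]

theorem filter_ne_child_eq_filter_parent_ne (cr : V) (hcr : ∀ v, (v ≠ r ∧ p v = r) ↔ v = cr) :
    univ.filter (fun u => u ≠ r ∧ u ≠ cr) = univ.filter (fun u => u ≠ r ∧ p u ≠ r) :=
  filter_congr fun u _ => and_congr_right fun hu =>
    not_congr ⟨fun h => h ▸ ((hcr cr).2 rfl).2, fun h => (hcr u).1 ⟨hu, h⟩⟩

end Tree

theorem mul_abs_div_le_abs {α : Type*} [Field α] [LinearOrder α] [IsStrictOrderedRing α]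
    {a b : α} (c : α) (hb : 0 < b) (hab : a ≤ b) : a * |c / b| ≤ |c| := by
  rw [abs_div, abs_of_pos hb, ← mul_div_assoc, div_le_iff₀ hb, mul_comm]
  exact mul_le_mul_of_nonneg_left hab (abs_nonneg c)

theorem sum_mul_ite_eq_le {ι α : Type*} [DecidableEq ι] [NonAssocSemiring α] [Preorder α]
    (S : Finset ι) (f : ι → α) (i : ι) (hf : 0 ≤ f i) :
    ∑ u ∈ S, f u * (if u = i then 1 else 0) ≤ f i := by
  simp only [mul_ite, mul_one, mul_zero, sum_ite_eq']
  split_ifs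
  exacts [le_rfl, hf]

theorem abs_mirror_numerator_le {x δ s e a b : ℝ} (hx : 0 ≤ x) (hδ : 0 ≤ δ) (hs : 0 ≤ s)
    (he : 0 ≤ e) (ha : 0 ≤ a) (hb : 0 ≤ b) :
    |-2 * x * s * e + (x + δ) * (a - b)| ≤ 2 * s * x * e + (a + b) * (x + δ) := by
  have hxse := mul_nonneg (mul_nonneg hx hs) he
  have hxa := mul_nonneg (add_nonneg hx hδ) ha
  have hxb := mul_nonneg (add_nonneg hx hδ) hb
  rw [abs_le]
  constructor <;> nlinarith

theorem stmt0_general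
    {V : Type*} [Fintype V] [DecidableEq V]
    (r : V) (p : V → V)
    (cr : V) (hcr : ∀ v, (v ≠ r ∧ p v = r) ↔ v = cr)
    -- ℓ is a leaf
    (ℓ : V) (hℓ : ℓ ≠ r ∧ ∀ v, v ≠ r → p v ≠ ℓ)
    -- weights: 0 ≤ w ≤ w̃ and w̃ > 0 on V⁰
    (w wt : V → ℝ)
    (hw : ∀ u, u ≠ r → 0 ≤ w u ∧ w u ≤ wt u)
    (hwt : ∀ u, u ≠ r → 0 < wt u)
    -- x, δ ∈ K(T)
    (x δ : V → ℝ)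
    (hx : x r = 1 ∧ (∀ u, u ≠ r → 0 ≤ x u) ∧
      ∀ u, ¬(u ≠ r ∧ ∀ v, v ≠ r → p v ≠ u) →
        ∑ v ∈ univ.filter (fun v => v ≠ r ∧ p v = u), x v = x u)
    (hδ : δ r = 1 ∧ (∀ u, u ≠ r → 0 ≤ δ u) ∧
      ∀ u, ¬(u ≠ r ∧ ∀ v, v ≠ r → p v ≠ u) →
        ∑ v ∈ univ.filter (fun v => v ≠ r ∧ p v = u), δ v = δ u)
    -- Lagrange multipliers
    (lam : V → ℝ)
    (hlam_nonneg : ∀ u, 0 ≤ lam u)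
    (hlam_leaf : ∀ u, (u ≠ r ∧ ∀ v, v ≠ r → p v ≠ u) → lam u = 0)
    -- rate and mirror-descent dynamic
    (s : ℝ) (hs : 0 ≤ s)
    (x' : V → ℝ)
    (hx' : ∀ u, u ≠ r → u ≠ cr →
      x' u = (-2 * x u * s * (if u = ℓ then 1 else 0)
              + (x u + δ u) * (lam (p u) - lam u)) / wt u)
    -- actual weight growth rate
    (sw : ℝ) (hsws : sw ≤ s) :
    sw * x ℓ + ∑ u ∈ univ.filter (fun u => u ≠ r ∧ u ≠ cr), w u * |x' u|
      ≤ 3 * s * x ℓ + 2 * ∑ u ∈ univ.filter (fun u => u ≠ r), lam u * (x u + δ u) := by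
  set S := univ.filter (fun u => u ≠ r ∧ u ≠ cr)
  set Λ := ∑ u ∈ univ.filter (fun u => u ≠ r), lam u * (x u + δ u)
  have hxδ : ∀ u, u ≠ r → 0 ≤ x u + δ u := fun u hu => add_nonneg (hx.2.1 u hu) (hδ.2.1 u hu)
  have hvertex : ∀ u ∈ S, w u * |x' u| ≤ 2 * s * x u * (if u = ℓ then 1 else 0)
      + lam (p u) * (x u + δ u) + lam u * (x u + δ u) := by
    intro u hu
    obtain ⟨hur, hucr⟩ := (mem_filter.1 hu).2
    rw [hx' u hur hucr, add_assoc, ← add_mul]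
    refine (mul_abs_div_le_abs _ (hwt u hur) (hw u hur).2).trans ?_
    exact abs_mirror_numerator_le (hx.2.1 u hur) (hδ.2.1 u hur) hs (by positivity)
      (hlam_nonneg _) (hlam_nonneg _)
  have hparent : ∑ u ∈ S, lam (p u) * (x u + δ u) = Λ := by
    rw [show S = _ from filter_ne_child_eq_filter_parent_ne r p cr hcr]
    exact sum_mul_parent_eq_sum_mul r p lam _ hlam_leaf fun u hu => by
      rw [sum_add_distrib]
      exact congrArg₂ (· + ·) (hx.2.2 u hu) (hδ.2.2 u hu)
  have hown : ∑ u ∈ S, lam u * (x u + δ u) ≤ Λ :=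
    sum_le_sum_of_subset_of_nonneg (monotone_filter_right _ fun _ _ h => h.1) fun u hu _ =>
      mul_nonneg (hlam_nonneg u) (hxδ u (mem_filter.1 hu).2)
  have hxℓ : 0 ≤ x ℓ := hx.2.1 ℓ hℓ.1
  calc sw * x ℓ + ∑ u ∈ S, w u * |x' u|
      ≤ s * x ℓ + (∑ u ∈ S, 2 * s * x u * (if u = ℓ then 1 else 0)
          + ∑ u ∈ S, lam (p u) * (x u + δ u) + ∑ u ∈ S, lam u * (x u + δ u)) := by
        rw [← sum_add_distrib, ← sum_add_distrib]
        exact add_le_add (mul_le_mul_of_nonneg_right hsws hxℓ) (sum_le_sum hvertex)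
    _ ≤ s * x ℓ + (2 * s * x ℓ + Λ + Λ) := by
        gcongr
        · exact sum_mul_ite_eq_le S (fun u => 2 * s * x u) ℓ (by positivity)
        · exact hparent.le
    _ = 3 * s * x ℓ + 2 * Λ := by ring

/-- Lemma: bound on the algorithm's instantaneous cost in a continuous step.
A finite rooted tree is given by a vertex set `V`, a root `r`, a parent map `p` and a depth
map `dep` with `dep r = 0` and `dep u = dep (p u) + 1` for `u ≠ r`.  `V⁰ = V \ {r}`,
a leaf is a non-root vertex with no children, and `cr` is the unique child of the root.
Membership of `x : V → ℝ` (with the convention `x r = 1`) in the polytope `K(T)` means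
nonnegativity on `V⁰` together with flow conservation at every internal (non-leaf) vertex. -/
theorem stmt0
    {V : Type*} [Fintype V] [DecidableEq V]
    (r : V) (p : V → V) (dep : V → ℕ)
    (hdep_r : dep r = 0)
    (hdep : ∀ u, u ≠ r → dep u = dep (p u) + 1)
    (cr : V) (hcr : ∀ v, (v ≠ r ∧ p v = r) ↔ v = cr)
    -- ℓ is a leaf
    (ℓ : V) (hℓ : ℓ ≠ r ∧ ∀ v, v ≠ r → p v ≠ ℓ)
    -- weights: 0 ≤ w ≤ w̃ and w̃ > 0 on V⁰
    (w wt : V → ℝ)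
    (hw : ∀ u, u ≠ r → 0 ≤ w u ∧ w u ≤ wt u)
    (hwt : ∀ u, u ≠ r → 0 < wt u)
    -- x, δ ∈ K(T)
    (x δ : V → ℝ)
    (hx : x r = 1 ∧ (∀ u, u ≠ r → 0 ≤ x u) ∧
      ∀ u, ¬(u ≠ r ∧ ∀ v, v ≠ r → p v ≠ u) →
        ∑ v ∈ univ.filter (fun v => v ≠ r ∧ p v = u), x v = x u)
    (hδ : δ r = 1 ∧ (∀ u, u ≠ r → 0 ≤ δ u) ∧
      ∀ u, ¬(u ≠ r ∧ ∀ v, v ≠ r → p v ≠ u) →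
        ∑ v ∈ univ.filter (fun v => v ≠ r ∧ p v = u), δ v = δ u)
    (hδpos : ∀ u, u ≠ r → 0 < δ u)
    -- Lagrange multipliers
    (lam : V → ℝ)
    (hlam_nonneg : ∀ u, 0 ≤ lam u)
    (hlam_leaf : ∀ u, (u ≠ r ∧ ∀ v, v ≠ r → p v ≠ u) → lam u = 0)
    -- rate and mirror-descent dynamic
    (s : ℝ) (hs : 0 ≤ s)
    (x' : V → ℝ)
    (hx' : ∀ u, u ≠ r → u ≠ cr →
      x' u = (-2 * x u * s * (if u = ℓ then 1 else 0)
              + (x u + δ u) * (lam (p u) - lam u)) / wt u)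
    -- actual weight growth rate
    (sw : ℝ) (hsw0 : 0 ≤ sw) (hsws : sw ≤ s) :
    sw * x ℓ + ∑ u ∈ univ.filter (fun u => u ≠ r ∧ u ≠ cr), w u * |x' u|
      ≤ 3 * s * x ℓ + 2 * ∑ u ∈ univ.filter (fun u => u ≠ r), lam u * (x u + δ u) :=
  stmt0_general r p cr hcr ℓ hℓ w wt hw hwt x δ hx hδ lam hlam_nonneg hlam_leaf s hs x' hx' sw hsws
end

section
/- Let a finite rooted tree be given, with ℓ a leaf, and let w̃ : V⁰ → ℝ satisfy w̃_u > 0 for all u ∈ V⁰. Let x, δ ∈ K(T) with δ_u > 0 for all u, let λ : V → ℝ satisfy λ_u ≥ 0 for all u and λ_u = 0 for every leaf u, let s ≥ 0, and let x'_u for u ∈ V⁰∖{c_r} be given by the mirror-descent dynamic. If k is a natural number with h(ℓ) ≤ k, then the rate of change of the weighted-depth potential Ψ = Σ_{u∈V⁰} h(u)·w̃_u·x_u satisfies h(ℓ)·s·x_ℓ + Σ_{u ∈ V⁰∖{c_r}} h(u)·w̃_u·x'_u ≥ −k·s·x_ℓ + Σ_{u ∈ V⁰} λ_u·(x_u + δ_u).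 -/
open Finset Real

/-- Lemma: lower bound on the rate of change of the weighted-depth
potential `Ψ = Σ_{u∈V⁰} h(u)·w̃_u·x_u` in a continuous step of the evolving tree game. -/
theorem stmt1
    {V : Type*} [Fintype V] [DecidableEq V]
    (r : V) (p : V → V) (dep : V → ℕ)
    (hdep_r : dep r = 0)
    (hdep : ∀ u, u ≠ r → dep u = dep (p u) + 1)
    (cr : V) (hcr : ∀ v, (v ≠ r ∧ p v = r) ↔ v = cr)
    -- ℓ is a leaf
    (ℓ : V) (hℓ : ℓ ≠ r ∧ ∀ v, v ≠ r → p v ≠ ℓ)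
    -- revised weights: w̃ > 0 on V⁰
    (wt : V → ℝ) (hwt : ∀ u, u ≠ r → 0 < wt u)
    -- x, δ ∈ K(T)
    (x δ : V → ℝ)
    (hx : x r = 1 ∧ (∀ u, u ≠ r → 0 ≤ x u) ∧
      ∀ u, ¬(u ≠ r ∧ ∀ v, v ≠ r → p v ≠ u) →
        ∑ v ∈ univ.filter (fun v => v ≠ r ∧ p v = u), x v = x u)
    (hδ : δ r = 1 ∧ (∀ u, u ≠ r → 0 ≤ δ u) ∧
      ∀ u, ¬(u ≠ r ∧ ∀ v, v ≠ r → p v ≠ u) →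
        ∑ v ∈ univ.filter (fun v => v ≠ r ∧ p v = u), δ v = δ u)
    (hδpos : ∀ u, u ≠ r → 0 < δ u)
    -- Lagrange multipliers
    (lam : V → ℝ)
    (hlam_nonneg : ∀ u, 0 ≤ lam u)
    (hlam_leaf : ∀ u, (u ≠ r ∧ ∀ v, v ≠ r → p v ≠ u) → lam u = 0)
    -- rate and mirror-descent dynamic
    (s : ℝ) (hs : 0 ≤ s)
    (x' : V → ℝ)
    (hx' : ∀ u, u ≠ r → u ≠ cr →
      x' u = (-2 * x u * s * (if u = ℓ then 1 else 0)
              + (x u + δ u) * (lam (p u) - lam u)) / wt u)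
    -- depth bound
    (k : ℕ) (hk : dep ℓ ≤ k) :
    (dep ℓ : ℝ) * s * x ℓ
        + ∑ u ∈ univ.filter (fun u => u ≠ r ∧ u ≠ cr), (dep u : ℝ) * wt u * x' u
      ≥ -(k : ℝ) * s * x ℓ
        + ∑ u ∈ univ.filter (fun u => u ≠ r), lam u * (x u + δ u) := by
  classical
  obtain ⟨hℓr, hℓleaf⟩ := hℓ
  obtain ⟨hxr, hxnn, hxflow⟩ := hx
  obtain ⟨hδr, hδnn, hδflow⟩ := hδ
  have hcrr : cr ≠ r ∧ p cr = r := (hcr cr).mpr rfl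
  have hdepcr : (dep cr : ℝ) = 1 := by
    rw [hdep cr hcrr.1, hcrr.2, hdep_r]; norm_num
  have hfr : univ.filter (fun v => v ≠ r ∧ p v = r) = {cr} := by
    ext v; simp [hcr v]
  have hrnotleaf : ¬(r ≠ r ∧ ∀ v, v ≠ r → p v ≠ r) := by simp
  have hxcr : x cr = 1 := by
    have h := hxflow r hrnotleaf
    rw [hfr, Finset.sum_singleton, hxr] at h; exact h
  have hδcr : δ cr = 1 := by
    have h := hδflow r hrnotleaf
    rw [hfr, Finset.sum_singleton, hδr] at h; exact h
  -- key fiber identity: for every v, sum over children of v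
  have key : ∀ v : V, ∑ u ∈ univ.filter (fun u => u ≠ r ∧ p u = v),
      (dep u : ℝ) * (x u + δ u) * lam (p u)
      = lam v * (((dep v : ℝ) + 1) * (x v + δ v)) := by
    intro v
    by_cases hvleaf : v ≠ r ∧ ∀ u, u ≠ r → p u ≠ v
    · have hempty : univ.filter (fun u => u ≠ r ∧ p u = v) = (∅ : Finset V) := by
        ext u
        simp only [mem_filter, mem_univ, true_and, notMem_empty, iff_false, not_and]
        intro hur hpu
        exact hvleaf.2 u hur hpu
      rw [hempty, Finset.sum_empty, hlam_leaf v hvleaf]; ring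
    · have hterm : ∀ u ∈ univ.filter (fun u => u ≠ r ∧ p u = v),
          (dep u : ℝ) * (x u + δ u) * lam (p u)
            = lam v * (((dep v : ℝ) + 1) * (x u + δ u)) := by
        intro u hu
        simp only [mem_filter, mem_univ, true_and] at hu
        rw [hu.2, hdep u hu.1, hu.2]
        push_cast; ring
      rw [Finset.sum_congr rfl hterm, ← Finset.mul_sum, ← Finset.mul_sum,
        Finset.sum_add_distrib, hxflow v hvleaf, hδflow v hvleaf]
  -- fiberwise decomposition
  have fib : ∑ u ∈ univ.filter (fun u => u ≠ r), (dep u : ℝ) * (x u + δ u) * lam (p u)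
      = ∑ v ∈ univ, lam v * (((dep v : ℝ) + 1) * (x v + δ v)) := by
    rw [← Finset.sum_fiberwise_of_maps_to (g := p) (t := (univ : Finset V))
      (fun u _ => mem_univ (p u))
      (f := fun u => (dep u : ℝ) * (x u + δ u) * lam (p u))]
    refine Finset.sum_congr rfl fun v _ => ?_
    rw [← key v]
    refine Finset.sum_congr ?_ fun u _ => rfl
    rw [Finset.filter_filter]
  have split_r : ∑ v ∈ univ, lam v * (((dep v : ℝ) + 1) * (x v + δ v))
      = lam r * 2 + ∑ v ∈ univ.filter (fun v => v ≠ r),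
          lam v * (((dep v : ℝ) + 1) * (x v + δ v)) := by
    rw [← Finset.sum_filter_add_sum_filter_not univ (fun v => v = r)]
    congr 1
    · have h1 : univ.filter (fun v => v = r) = ({r} : Finset V) := by
        ext v; simp
      rw [h1, Finset.sum_singleton, hdep_r, hxr, hδr]; norm_num
  have hcrmem : cr ∈ univ.filter (fun u => u ≠ r) := by
    simp [hcrr.1]
  have hS : univ.filter (fun u => u ≠ r ∧ u ≠ cr)
      = (univ.filter (fun u => u ≠ r)).erase cr := by
    ext u; simp only [mem_filter, mem_univ, true_and, Finset.mem_erase]; tauto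
  -- value of the telescoped lambda sum
  have Tlam : ∑ u ∈ univ.filter (fun u => u ≠ r ∧ u ≠ cr),
      (dep u : ℝ) * (x u + δ u) * (lam (p u) - lam u)
      = (∑ u ∈ univ.filter (fun u => u ≠ r), lam u * (x u + δ u)) + 2 * lam cr := by
    have h1 : ∑ u ∈ univ.filter (fun u => u ≠ r),
        (dep u : ℝ) * (x u + δ u) * (lam (p u) - lam u)
        = (dep cr : ℝ) * (x cr + δ cr) * (lam (p cr) - lam cr)
          + ∑ u ∈ univ.filter (fun u => u ≠ r ∧ u ≠ cr),
              (dep u : ℝ) * (x u + δ u) * (lam (p u) - lam u) := by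
      rw [hS]
      exact (Finset.add_sum_erase _
        (fun u => (dep u : ℝ) * (x u + δ u) * (lam (p u) - lam u)) hcrmem).symm
    have h2 : ∑ u ∈ univ.filter (fun u => u ≠ r),
        (dep u : ℝ) * (x u + δ u) * (lam (p u) - lam u)
        = lam r * 2 + ∑ u ∈ univ.filter (fun u => u ≠ r), lam u * (x u + δ u) := by
      have expand : ∀ u : V, (dep u : ℝ) * (x u + δ u) * (lam (p u) - lam u)
          = (dep u : ℝ) * (x u + δ u) * lam (p u)
            - (dep u : ℝ) * (x u + δ u) * lam u := fun u => by ring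
      simp only [expand]
      rw [Finset.sum_sub_distrib, fib, split_r, add_sub_assoc, ← Finset.sum_sub_distrib]
      congr 1
      refine Finset.sum_congr rfl fun u _ => ?_
      ring
    rw [h2] at h1
    rw [hdepcr, hxcr, hδcr, hcrr.2] at h1
    linarith
  -- rewrite each summand of the main sum
  have hterm : ∀ u ∈ univ.filter (fun u => u ≠ r ∧ u ≠ cr),
      (dep u : ℝ) * wt u * x' u
        = (if u = ℓ then -2 * (dep u : ℝ) * x u * s else 0)
          + (dep u : ℝ) * (x u + δ u) * (lam (p u) - lam u) := by
    intro u hu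
    simp only [mem_filter, mem_univ, true_and] at hu
    rw [hx' u hu.1 hu.2]
    have hw : wt u ≠ 0 := ne_of_gt (hwt u hu.1)
    by_cases h : u = ℓ
    · subst h
      simp only [if_pos rfl]
      field_simp
      simp only [↓reduceIte]
      ring
    · simp only [if_neg h]
      field_simp
      ring
  have hsum : ∑ u ∈ univ.filter (fun u => u ≠ r ∧ u ≠ cr), (dep u : ℝ) * wt u * x' u
      = (if ℓ ∈ univ.filter (fun u => u ≠ r ∧ u ≠ cr)
          then -2 * (dep ℓ : ℝ) * x ℓ * s else 0)
        + ((∑ u ∈ univ.filter (fun u => u ≠ r), lam u * (x u + δ u)) + 2 * lam cr) := by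
    rw [Finset.sum_congr rfl hterm, Finset.sum_add_distrib, Tlam,
      Finset.sum_ite_eq' (univ.filter (fun u => u ≠ r ∧ u ≠ cr)) ℓ
        (fun u => -2 * (dep u : ℝ) * x u * s)]
  have hxℓ : 0 ≤ x ℓ := hxnn ℓ hℓr
  have hk' : (dep ℓ : ℝ) ≤ (k : ℝ) := by exact_mod_cast hk
  have hlamcr : 0 ≤ lam cr := hlam_nonneg cr
  rw [hsum]
  by_cases hℓcr : ℓ = cr
  · have : ℓ ∉ univ.filter (fun u => u ≠ r ∧ u ≠ cr) := by simp [hℓcr]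
    rw [if_neg this]
    have h1 : 0 ≤ (dep ℓ : ℝ) * s * x ℓ :=
      mul_nonneg (mul_nonneg (Nat.cast_nonneg _) hs) hxℓ
    have h2 : 0 ≤ (k : ℝ) * s * x ℓ :=
      mul_nonneg (mul_nonneg (Nat.cast_nonneg _) hs) hxℓ
    linarith
  · have : ℓ ∈ univ.filter (fun u => u ≠ r ∧ u ≠ cr) := by simp [hℓr, hℓcr]
    rw [if_pos this]
    have h3 : 0 ≤ ((k : ℝ) - (dep ℓ : ℝ)) * s * x ℓ :=
      mul_nonneg (mul_nonneg (by linarith) hs) hxℓ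
    nlinarith
end

section
/- Let a finite rooted tree be given, with ℓ a leaf, and let w, w̃ : V⁰ → ℝ satisfy 0 ≤ w_u ≤ w̃_u and w̃_u > 0 for all u ∈ V⁰. Let x, y, δ ∈ K(T) with δ_u > 0 for all u, let λ : V → ℝ satisfy λ_u ≥ 0 for all u and λ_u = 0 for every leaf u, and let x'_u for u ∈ V⁰∖{c_r} be given by the mirror-descent dynamic with rate s ≥ 0. Let k ≥ 2 be an integer with h(ℓ) ≤ k, let d ≥ 2 be a real with δ_ℓ ≥ d^{1−k}, and let s_w ≥ 0 satisfy s_w ≤ s ≤ 2·s_w. Define C' := s_w·x_ℓ + Σ_{u ∈ V⁰∖{c_r}} w_u·|x'_u|, D' := s·(2·y_ℓ·log((1+δ_ℓ)/(x_ℓ+δ_ℓ)) + x_ℓ) + Σ_{u ∈ V⁰∖{c_r}} w̃_u·x'_u·(1 − 2·y_u/(x_u+δ_u)), and Ψ' := h(ℓ)·s·x_ℓ + Σ_{u ∈ V⁰∖{c_r}} h(u)·w̃_u·x'_u. Then C' + 4k·D' − 2·Ψ' ≤ 16·k·(2 + k·log d)·s_w·y_ℓ. -/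
open Finset Real

set_option maxHeartbeats 1000000

private lemma fiber_sum {V : Type*} [Fintype V] [DecidableEq V]
    (r cr : V) (p : V → V)
    (hcr : ∀ v, (v ≠ r ∧ p v = r) ↔ v = cr)
    (f g : V → ℝ)
    (hg : ∀ u, ¬(u ≠ r ∧ ∀ v, v ≠ r → p v ≠ u) →
        ∑ v ∈ univ.filter (fun v => v ≠ r ∧ p v = u), g v = g u)
    (hf : ∀ v, (v ≠ r ∧ ∀ u, u ≠ r → p u ≠ v) → f v = 0) :
    ∑ u ∈ univ.filter (fun u => u ≠ r ∧ u ≠ cr), g u * f (p u)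
      = ∑ v ∈ univ.filter (fun v => v ≠ r), f v * g v := by
  have key : ∀ v : V, ∑ u ∈ (univ.filter (fun u => u ≠ r ∧ u ≠ cr)).filter
      (fun u => p u = v), g u * f (p u) = if v ≠ r then f v * g v else 0 := by
    intro v
    by_cases hv : v = r
    · subst hv
      rw [if_neg (by simp)]
      apply Finset.sum_eq_zero
      intro u hu
      simp only [mem_filter, mem_univ, true_and] at hu
      exact absurd ((hcr u).mp ⟨hu.1.1, hu.2⟩) hu.1.2
    · rw [if_pos hv]
      by_cases hleaf : (v ≠ r ∧ ∀ u, u ≠ r → p u ≠ v)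
      · rw [Finset.sum_eq_zero, hf v hleaf, zero_mul]
        intro u hu
        simp only [mem_filter, mem_univ, true_and] at hu
        exact absurd hu.2 (hleaf.2 u hu.1.1)
      · have hset : (univ.filter (fun u => u ≠ r ∧ u ≠ cr)).filter (fun u => p u = v)
            = univ.filter (fun u => u ≠ r ∧ p u = v) := by
          ext u
          simp only [mem_filter, mem_univ, true_and]
          constructor
          · rintro ⟨⟨h1, _⟩, h3⟩; exact ⟨h1, h3⟩
          · rintro ⟨h1, h3⟩
            refine ⟨⟨h1, fun hucr => ?_⟩, h3⟩
            have h4 := (hcr u).mpr hucr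
            exact hv (by rw [← h3, h4.2])
        rw [hset]
        calc ∑ u ∈ univ.filter (fun u => u ≠ r ∧ p u = v), g u * f (p u)
            = ∑ u ∈ univ.filter (fun u => u ≠ r ∧ p u = v), f v * g u := by
              refine Finset.sum_congr rfl fun u hu => ?_
              simp only [mem_filter] at hu
              rw [hu.2.2, mul_comm]
          _ = f v * g v := by rw [← Finset.mul_sum, hg v hleaf]
  calc ∑ u ∈ univ.filter (fun u => u ≠ r ∧ u ≠ cr), g u * f (p u)
      = ∑ v ∈ univ, ∑ u ∈ (univ.filter (fun u => u ≠ r ∧ u ≠ cr)).filter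
          (fun u => p u = v), g u * f (p u) :=
        (Finset.sum_fiberwise_of_maps_to (fun u _ => mem_univ (p u)) _).symm
    _ = ∑ v ∈ univ, if v ≠ r then f v * g v else 0 :=
        Finset.sum_congr rfl fun v _ => key v
    _ = ∑ v ∈ univ.filter (fun v => v ≠ r), f v * g v := (Finset.sum_filter _ _).symm

private lemma erase_sum {V : Type*} [Fintype V] [DecidableEq V]
    (r cr : V) (hne : cr ≠ r) (F : V → ℝ) :
    ∑ u ∈ univ.filter (fun u => u ≠ r ∧ u ≠ cr), F u
      = (∑ v ∈ univ.filter (fun v => v ≠ r), F v) - F cr := by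
  have h1 : univ.filter (fun u : V => u ≠ r ∧ u ≠ cr)
      = (univ.filter (fun v : V => v ≠ r)).erase cr := by
    ext u
    simp only [mem_filter, mem_univ, true_and, mem_erase]
    tauto
  rw [h1, Finset.sum_erase_eq_sub (by simp [hne])]

/-- Lemma 5 of the paper: in a continuous step,
`C' + P' ≤ O(k² log d) · w'_ℓ · y_ℓ` where `P = 4kD − 2Ψ`. -/
theorem stmt3
    {V : Type*} [Fintype V] [DecidableEq V]
    (r : V) (p : V → V) (dep : V → ℕ)
    (hdep_r : dep r = 0)
    (hdep : ∀ u, u ≠ r → dep u = dep (p u) + 1)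
    (cr : V) (hcr : ∀ v, (v ≠ r ∧ p v = r) ↔ v = cr)
    -- ℓ is a leaf
    (ℓ : V) (hℓ : ℓ ≠ r ∧ ∀ v, v ≠ r → p v ≠ ℓ)
    -- weights: 0 ≤ w ≤ w̃ and w̃ > 0 on V⁰
    (w wt : V → ℝ)
    (hw : ∀ u, u ≠ r → 0 ≤ w u ∧ w u ≤ wt u)
    (hwt : ∀ u, u ≠ r → 0 < wt u)
    -- x, y, δ ∈ K(T)
    (x y δ : V → ℝ)
    (hx : x r = 1 ∧ (∀ u, u ≠ r → 0 ≤ x u) ∧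
      ∀ u, ¬(u ≠ r ∧ ∀ v, v ≠ r → p v ≠ u) →
        ∑ v ∈ univ.filter (fun v => v ≠ r ∧ p v = u), x v = x u)
    (hy : y r = 1 ∧ (∀ u, u ≠ r → 0 ≤ y u) ∧
      ∀ u, ¬(u ≠ r ∧ ∀ v, v ≠ r → p v ≠ u) →
        ∑ v ∈ univ.filter (fun v => v ≠ r ∧ p v = u), y v = y u)
    (hδ : δ r = 1 ∧ (∀ u, u ≠ r → 0 ≤ δ u) ∧
      ∀ u, ¬(u ≠ r ∧ ∀ v, v ≠ r → p v ≠ u) →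
        ∑ v ∈ univ.filter (fun v => v ≠ r ∧ p v = u), δ v = δ u)
    (hδpos : ∀ u, u ≠ r → 0 < δ u)
    -- Lagrange multipliers
    (lam : V → ℝ)
    (hlam_nonneg : ∀ u, 0 ≤ lam u)
    (hlam_leaf : ∀ u, (u ≠ r ∧ ∀ v, v ≠ r → p v ≠ u) → lam u = 0)
    -- rate and mirror-descent dynamic
    (s : ℝ) (hs : 0 ≤ s)
    (x' : V → ℝ)
    (hx' : ∀ u, u ≠ r → u ≠ cr →
      x' u = (-2 * x u * s * (if u = ℓ then 1 else 0)
              + (x u + δ u) * (lam (p u) - lam u)) / wt u)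
    -- parameters k, d and the actual weight growth rate s_w
    (k : ℕ) (hk : 2 ≤ k) (hkℓ : dep ℓ ≤ k)
    (d : ℝ) (hd : 2 ≤ d) (hδℓ : d ^ (1 - (k : ℤ)) ≤ δ ℓ)
    (sw : ℝ) (hsw0 : 0 ≤ sw) (hsws : sw ≤ s) (hs2sw : s ≤ 2 * sw) :
    (sw * x ℓ + ∑ u ∈ univ.filter (fun u => u ≠ r ∧ u ≠ cr), w u * |x' u|)
      + 4 * (k : ℝ) *
        (s * (2 * y ℓ * Real.log ((1 + δ ℓ) / (x ℓ + δ ℓ)) + x ℓ)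
          + ∑ u ∈ univ.filter (fun u => u ≠ r ∧ u ≠ cr),
              wt u * x' u * (1 - 2 * y u / (x u + δ u)))
      - 2 * ((dep ℓ : ℝ) * s * x ℓ
          + ∑ u ∈ univ.filter (fun u => u ≠ r ∧ u ≠ cr), (dep u : ℝ) * wt u * x' u)
      ≤ 16 * (k : ℝ) * (2 + (k : ℝ) * Real.log d) * sw * y ℓ := by
  obtain ⟨hcrr, hpcr⟩ := (hcr cr).mpr rfl
  have hrnotleaf : ¬(r ≠ r ∧ ∀ v, v ≠ r → p v ≠ r) := by simp
  have hfilr : (univ.filter (fun v : V => v ≠ r ∧ p v = r)) = {cr} := by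
    ext v; simp [hcr v]
  have hxcr : x cr = 1 := by
    have h := hx.2.2 r hrnotleaf; rw [hfilr, Finset.sum_singleton, hx.1] at h; exact h
  have hycr : y cr = 1 := by
    have h := hy.2.2 r hrnotleaf; rw [hfilr, Finset.sum_singleton, hy.1] at h; exact h
  have hδcr : δ cr = 1 := by
    have h := hδ.2.2 r hrnotleaf; rw [hfilr, Finset.sum_singleton, hδ.1] at h; exact h
  have hdcr : dep cr = 1 := by rw [hdep cr hcrr, hpcr, hdep_r]
  have hdpos : (0:ℝ) < d := by linarith
  have hlogd : 0 ≤ Real.log d := Real.log_nonneg (by linarith)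
  have hk2 : (2:ℝ) ≤ (k:ℝ) := by exact_mod_cast hk
  have hk0 : (0:ℝ) ≤ (k:ℝ) := by linarith
  have hxl0 : 0 ≤ x ℓ := hx.2.1 ℓ hℓ.1
  have hyl0 : 0 ≤ y ℓ := hy.2.1 ℓ hℓ.1
  have hδl0 : 0 < δ ℓ := hδpos ℓ hℓ.1
  by_cases hlcr : ℓ = cr
  · -- degenerate case: the only vertex below the root is cr = ℓ
    have hno : ∀ n : ℕ, ∀ u : V, dep u = n → ¬(u ≠ r ∧ u ≠ cr) := by
      intro n
      induction n using Nat.strong_induction_on with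
      | _ n ih =>
        rintro u hdu ⟨hur, hucr⟩
        have hpu_ne_r : p u ≠ r := fun h => hucr ((hcr u).mp ⟨hur, h⟩)
        have hpu_ne_cr : p u ≠ cr := fun h => hℓ.2 u hur (by rw [h, ← hlcr])
        have hlt : dep (p u) < n := by
          have := hdep u hur; omega
        exact ih _ hlt (p u) rfl ⟨hpu_ne_r, hpu_ne_cr⟩
    have hempty : univ.filter (fun u : V => u ≠ r ∧ u ≠ cr) = (∅ : Finset V) := by
      rw [Finset.filter_eq_empty_iff]
      exact fun u _ => hno (dep u) u rfl
    rw [hempty]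
    subst hlcr
    rw [hxcr, hycr, hδcr, hdcr]
    simp only [Finset.sum_empty, Nat.cast_one]
    rw [show ((1:ℝ)+1)/(1+1) = 1 by norm_num, Real.log_one]
    have e2 : 0 ≤ (k:ℝ)*((k:ℝ)*Real.log d)*sw := by positivity
    have e3 : 0 ≤ (k:ℝ)*sw := by positivity
    have m1 := mul_le_mul_of_nonneg_left hs2sw (by linarith : (0:ℝ) ≤ 4*(k:ℝ)-2)
    linarith [m1, e2, e3, hsw0]
  · -- main case: ℓ ∈ S
    set S := univ.filter (fun u : V => u ≠ r ∧ u ≠ cr) with hS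
    set V0 := univ.filter (fun v : V => v ≠ r) with hV0
    have hlS : ℓ ∈ S := by simp [hS, hℓ.1, hlcr]
    set A := ∑ v ∈ V0, lam v * (x v + δ v) with hA
    set Ad := ∑ v ∈ V0, ((dep v : ℝ) * lam v) * (x v + δ v) with hAd
    set By := ∑ v ∈ V0, lam v * y v with hBy
    have hA0 : 0 ≤ A := by
      refine Finset.sum_nonneg fun v hv => ?_
      simp only [hV0, mem_filter, mem_univ, true_and] at hv
      have := hx.2.1 v hv; have := hδ.2.1 v hv
      exact mul_nonneg (hlam_nonneg v) (by linarith)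
    have hlamc0 : 0 ≤ lam cr := hlam_nonneg cr
    have hxδcons : ∀ u, ¬(u ≠ r ∧ ∀ v, v ≠ r → p v ≠ u) →
        ∑ v ∈ univ.filter (fun v => v ≠ r ∧ p v = u), (x v + δ v) = x u + δ u := by
      intro u hu; rw [Finset.sum_add_distrib, hx.2.2 u hu, hδ.2.2 u hu]
    have hlam_leaf' : ∀ v, (v ≠ r ∧ ∀ u, u ≠ r → p u ≠ v) →
        ((dep v : ℝ) + 1) * lam v = 0 := fun v hv => by rw [hlam_leaf v hv, mul_zero]
    -- the five telescoping identities
    have E1 : ∑ u ∈ S, (x u + δ u) * lam (p u) = A :=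
      fiber_sum r cr p hcr lam (fun v => x v + δ v) hxδcons hlam_leaf
    have E2 : ∑ u ∈ S, (x u + δ u) * lam u = A - 2 * lam cr := by
      rw [erase_sum r cr hcrr (fun u => (x u + δ u) * lam u), hxcr, hδcr]
      have : ∑ v ∈ V0, (x v + δ v) * lam v = A :=
        Finset.sum_congr rfl fun v _ => mul_comm _ _
      rw [this]; ring
    have E3 : ∑ u ∈ S, y u * lam (p u) = By :=
      fiber_sum r cr p hcr lam y hy.2.2 hlam_leaf
    have E4 : ∑ u ∈ S, y u * lam u = By - lam cr := by
      rw [erase_sum r cr hcrr (fun u => y u * lam u), hycr]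
      have : ∑ v ∈ V0, y v * lam v = By :=
        Finset.sum_congr rfl fun v _ => mul_comm _ _
      rw [this]; ring
    have E5 : ∑ u ∈ S, (x u + δ u) * (((dep (p u) : ℝ) + 1) * lam (p u)) = Ad + A := by
      rw [fiber_sum r cr p hcr (fun v => ((dep v : ℝ) + 1) * lam v)
        (fun v => x v + δ v) hxδcons hlam_leaf']
      rw [hAd, hA, ← Finset.sum_add_distrib]
      exact Finset.sum_congr rfl fun v _ => by ring
    have E6 : ∑ u ∈ S, (dep u : ℝ) * ((x u + δ u) * lam u) = Ad - 2 * lam cr := by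
      rw [erase_sum r cr hcrr (fun u => (dep u : ℝ) * ((x u + δ u) * lam u)),
        hxcr, hδcr, hdcr]
      have : ∑ v ∈ V0, (dep v : ℝ) * ((x v + δ v) * lam v) = Ad :=
        Finset.sum_congr rfl fun v _ => by ring
      rw [this]; push_cast; ring
    -- pointwise facts on S
    have hmem : ∀ u ∈ S, u ≠ r ∧ u ≠ cr := by
      intro u hu; simpa [hS] using hu
    have hxδpos : ∀ u ∈ S, 0 < x u + δ u := by
      intro u hu
      have h := (hmem u hu).1
      have := hx.2.1 u h; have := hδpos u h; linarith
    have hax : ∀ u ∈ S, wt u * x' u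
        = -2 * x u * s * (if u = ℓ then 1 else 0)
          + (x u + δ u) * (lam (p u) - lam u) := by
      intro u hu
      obtain ⟨h1, h2⟩ := hmem u hu
      rw [hx' u h1 h2, mul_div_cancel₀ _ (ne_of_gt (hwt u h1))]
    -- the D'-sum identity
    have H2 : ∑ u ∈ S, wt u * x' u * (1 - 2 * y u / (x u + δ u))
        = -2*s*x ℓ + 4*s*(x ℓ * y ℓ / (x ℓ + δ ℓ)) := by
      have hpt : ∀ u ∈ S, wt u * x' u * (1 - 2 * y u / (x u + δ u))
          = (if u = ℓ then (-2*s*x ℓ + 4*s*(x ℓ * y ℓ / (x ℓ + δ ℓ))) else 0)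
            + ((x u + δ u) * lam (p u) - (x u + δ u) * lam u)
            - 2 * (y u * lam (p u)) + 2 * (y u * lam u) := by
        intro u hu
        rw [hax u hu]
        have h0 := hxδpos u hu
        rcases eq_or_ne u ℓ with h | h
        · subst h
          rw [if_pos rfl, if_pos rfl]
          field_simp [h0.ne']
          ring
        · rw [if_neg h, if_neg h]
          field_simp [h0.ne']
          ring
      rw [Finset.sum_congr rfl hpt]
      simp only [Finset.sum_add_distrib, Finset.sum_sub_distrib, ← Finset.mul_sum]
      rw [E1, E2, E3, E4, Finset.sum_ite_eq' S ℓ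
        (fun _ => (-2*s*x ℓ + 4*s*(x ℓ * y ℓ / (x ℓ + δ ℓ)))), if_pos hlS]
      ring
    -- the Ψ'-sum identity
    have H3 : ∑ u ∈ S, (dep u : ℝ) * wt u * x' u
        = -2*s*x ℓ*(dep ℓ : ℝ) + A + 2 * lam cr := by
      have hpt : ∀ u ∈ S, (dep u : ℝ) * wt u * x' u
          = (if u = ℓ then (-2*s*x ℓ*(dep ℓ : ℝ)) else 0)
            + (x u + δ u) * (((dep (p u) : ℝ) + 1) * lam (p u))
            - (dep u : ℝ) * ((x u + δ u) * lam u) := by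
        intro u hu
        obtain ⟨h1, _⟩ := hmem u hu
        have hd : (dep u : ℝ) = (dep (p u) : ℝ) + 1 := by exact_mod_cast hdep u h1
        rw [show (dep u : ℝ) * wt u * x' u = (dep u : ℝ) * (wt u * x' u) by ring,
          hax u hu]
        rcases eq_or_ne u ℓ with h | h
        · subst h; rw [if_pos rfl, if_pos rfl, hd]; ring
        · rw [if_neg h, if_neg h, hd]; ring
      rw [Finset.sum_congr rfl hpt]
      simp only [Finset.sum_add_distrib, Finset.sum_sub_distrib]
      rw [E5, E6, Finset.sum_ite_eq' S ℓ (fun _ => (-2*s*x ℓ*(dep ℓ : ℝ))), if_pos hlS]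
      ring
    -- the C'-sum bound
    have H1 : ∑ u ∈ S, w u * |x' u| ≤ 2*s*x ℓ + (2*A - 2*lam cr) := by
      have hpt : ∀ u ∈ S, w u * |x' u|
          ≤ (if u = ℓ then 2*s*x ℓ else 0)
            + ((x u + δ u) * lam (p u) + (x u + δ u) * lam u) := by
        intro u hu
        obtain ⟨h1, _⟩ := hmem u hu
        have hb1 : w u * |x' u| ≤ wt u * |x' u| :=
          mul_le_mul_of_nonneg_right (hw u h1).2 (abs_nonneg _)
        have hb2 : wt u * |x' u| = |wt u * x' u| := by
          rw [abs_mul, abs_of_pos (hwt u h1)]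
        rw [hb2, hax u hu] at hb1
        refine hb1.trans ?_
        have habs : |(x u + δ u) * (lam (p u) - lam u)|
            ≤ (x u + δ u) * lam (p u) + (x u + δ u) * lam u := by
          rw [abs_mul, abs_of_pos (hxδpos u hu), ← mul_add]
          refine mul_le_mul_of_nonneg_left ?_ (le_of_lt (hxδpos u hu))
          rw [abs_le]
          constructor <;> [linarith [hlam_nonneg (p u), hlam_nonneg u];
            linarith [hlam_nonneg (p u), hlam_nonneg u]]
        have hXr : (x u + δ u) * (lam (p u) - lam u)
            ≤ (x u + δ u) * lam (p u) + (x u + δ u) * lam u :=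
          (le_abs_self _).trans habs
        have hXl : -((x u + δ u) * lam (p u) + (x u + δ u) * lam u)
            ≤ (x u + δ u) * (lam (p u) - lam u) := by
          have := neg_abs_le ((x u + δ u) * (lam (p u) - lam u))
          linarith
        have hsxu : 0 ≤ s * x u := mul_nonneg hs (hx.2.1 u h1)
        rcases eq_or_ne u ℓ with h | h
        · subst h
          rw [if_pos rfl, if_pos rfl, abs_le]
          constructor <;> [linarith; linarith]
        · rw [if_neg h, if_neg h, abs_le]
          constructor <;> [linarith; linarith]
      calc ∑ u ∈ S, w u * |x' u|
          ≤ ∑ u ∈ S, ((if u = ℓ then 2*s*x ℓ else 0)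
              + ((x u + δ u) * lam (p u) + (x u + δ u) * lam u)) :=
            Finset.sum_le_sum hpt
        _ = 2*s*x ℓ + (2*A - 2*lam cr) := by
            simp only [Finset.sum_add_distrib]
            rw [E1, E2, Finset.sum_ite_eq' S ℓ (fun _ => 2*s*x ℓ), if_pos hlS]
            ring
    -- bounds on Q and L
    have hxδl : (0:ℝ) < x ℓ + δ ℓ := by linarith
    have hQle : x ℓ * y ℓ / (x ℓ + δ ℓ) ≤ y ℓ := by
      rw [div_le_iff₀ hxδl]
      linarith [mul_nonneg hyl0 hδl0.le]
    have hL : Real.log ((1 + δ ℓ) / (x ℓ + δ ℓ)) ≤ (k:ℝ) * Real.log d := by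
      have hdk1 : (1:ℝ) ≤ d ^ k := by
        calc (1:ℝ) = 1 ^ k := (one_pow k).symm
          _ ≤ d ^ k := pow_le_pow_left₀ (by norm_num) (by linarith) k
      have hz1 : d ^ (1 - (k:ℤ)) * d ^ k = d := by
        rw [← zpow_natCast d k, ← zpow_add₀ (by linarith : d ≠ 0)]
        norm_num
      have hzle : d ^ (1 - (k:ℤ)) ≤ 1 := by
        apply zpow_le_one_of_nonpos₀ (by linarith : (1:ℝ) ≤ d)
        omega
      have hδdk : 1 ≤ δ ℓ * (d ^ k - 1) := by
        have h5 : d ^ (1 - (k:ℤ)) * (d ^ k - 1) ≤ δ ℓ * (d ^ k - 1) :=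
          mul_le_mul_of_nonneg_right hδℓ (by linarith)
        nlinarith [hz1, hzle]
      have harg : (1 + δ ℓ) / (x ℓ + δ ℓ) ≤ d ^ k := by
        rw [div_le_iff₀ hxδl]
        nlinarith [mul_nonneg (by positivity : (0:ℝ) ≤ d ^ k) hxl0]
      calc Real.log ((1 + δ ℓ) / (x ℓ + δ ℓ)) ≤ Real.log (d ^ k) :=
            Real.log_le_log (by positivity) harg
        _ = (k:ℝ) * Real.log d := by rw [Real.log_pow]
    -- final assembly
    rw [H2, H3]
    set L := Real.log ((1 + δ ℓ) / (x ℓ + δ ℓ)) with hLdef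
    set Q := x ℓ * y ℓ / (x ℓ + δ ℓ) with hQdef
    have hQ0 : 0 ≤ Q := by rw [hQdef]; positivity
    have hdepk : (dep ℓ : ℝ) ≤ (k:ℝ) := by exact_mod_cast hkℓ
    have g1 : 2*s*x ℓ*(dep ℓ : ℝ) ≤ 2*s*x ℓ*(k:ℝ) :=
      mul_le_mul_of_nonneg_left hdepk (by positivity)
    have g3 : 0 ≤ (2*(k:ℝ) - 3) * (s * x ℓ) :=
      mul_nonneg (by linarith) (mul_nonneg hs hxl0)
    have g4 : 8*(k:ℝ)*(s*y ℓ*L) ≤ 8*(k:ℝ)*(s*y ℓ*((k:ℝ)*Real.log d)) := by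
      refine mul_le_mul_of_nonneg_left ?_ (by linarith)
      exact mul_le_mul_of_nonneg_left hL (mul_nonneg hs hyl0)
    have g5 : 8*(k:ℝ)*(s*(y ℓ*((k:ℝ)*Real.log d)))
        ≤ 8*(k:ℝ)*((2*sw)*(y ℓ*((k:ℝ)*Real.log d))) := by
      refine mul_le_mul_of_nonneg_left ?_ (by linarith)
      exact mul_le_mul_of_nonneg_right hs2sw (by positivity)
    have g6 : 16*(k:ℝ)*(s*Q) ≤ 16*(k:ℝ)*(s*y ℓ) := by
      refine mul_le_mul_of_nonneg_left ?_ (by linarith)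
      exact mul_le_mul_of_nonneg_left hQle hs
    have g7 : 16*(k:ℝ)*(s*y ℓ) ≤ 16*(k:ℝ)*((2*sw)*y ℓ) := by
      refine mul_le_mul_of_nonneg_left ?_ (by linarith)
      exact mul_le_mul_of_nonneg_right hs2sw hyl0
    have g2 : sw * x ℓ ≤ s * x ℓ := mul_le_mul_of_nonneg_right hsws hxl0
    linarith [H1, g1, g2, g3, g4, g5, g6, g7, hA0, hlamc0]
end

section
/- Let k ≥ 1 and j ≥ 1 be integers, ε > 0, d ≥ 2 a real, q ≥ 2 an integer, and h an integer with 0 ≤ h ≤ k − 1. Let δ be a real with 0 < δ ≤ 1 and δ/q ≥ d^{1−k}, let w̃ be a real with 0 ≤ w̃ ≤ ε·2^{−j+1}, and let x_1,…,x_q, y_1,…,y_q be nonnegative reals with Σ_{i=1}^q x_i ≤ 1 and Σ_{i=1}^q y_i ≤ 1. Then the increase of the potential caused by attaching the q new leaves satisfies 2·Σ_{i=1}^q w̃·( 4k·y_i·log((1 + δ/q)/(x_i + δ/q)) + (2k − h − 1)·x_i ) ≤ ε·2^{−j+2}·(2k + 4k²·log d). -/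
/-!
Since `δ / q ≥ d ^ (1 - k)` and `d ≥ 2`, every ratio `(1 + δ/q) / (x + δ/q)` is at most
`1 + d ^ (k - 1) ≤ d ^ k`, so each new leaf contributes at most `4k² log d · y + 2k · x`.
Summing over the leaves with `∑ x, ∑ y ≤ 1` bounds the bracket by `4k² log d + 2k`, and the
weight `w̃ ≤ ε 2^{1-j}` with the outer factor `2` gives `ε 2^{2-j}`.
-/

open Finset Real

lemma one_add_inv_le_pow {d δ : ℝ} {k : ℕ} (hd : 2 ≤ d) (hk : 1 ≤ k)
    (hδ : d ^ (1 - (k : ℤ)) ≤ δ) : 1 + δ⁻¹ ≤ d ^ k := by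
  obtain ⟨m, rfl⟩ : ∃ m, k = m + 1 := ⟨k - 1, by omega⟩
  have hdm : 1 ≤ d ^ m := one_le_pow₀ (by linarith)
  have hinv : δ⁻¹ ≤ d ^ m := by
    have hδ' : (d ^ m)⁻¹ ≤ δ := by
      simpa [sub_add_cancel_left, zpow_neg] using hδ
    simpa using inv_anti₀ (by positivity) hδ'
  calc 1 + δ⁻¹ ≤ 2 * d ^ m := by linarith
    _ ≤ d ^ (m + 1) := by rw [pow_succ']; gcongr

lemma log_div_add_le {x δ d : ℝ} {k : ℕ} (hx : 0 ≤ x) (hd : 2 ≤ d) (hk : 1 ≤ k)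
    (hδ : d ^ (1 - (k : ℤ)) ≤ δ) : log ((1 + δ) / (x + δ)) ≤ k * log d := by
  have hδ0 : 0 < δ := (zpow_pos (by linarith) _).trans_le hδ
  calc log ((1 + δ) / (x + δ)) ≤ log (d ^ k) := by
        refine log_le_log (by positivity) ?_
        calc (1 + δ) / (x + δ) ≤ (1 + δ) / δ := by gcongr; linarith
          _ = 1 + δ⁻¹ := by rw [add_div, div_self hδ0.ne', one_div, add_comm]
          _ ≤ d ^ k := one_add_inv_le_pow hd hk hδ
    _ = k * log d := Real.log_pow d k

lemma leaf_term_le {x y δ d : ℝ} {k h : ℕ} (hx : 0 ≤ x) (hy : 0 ≤ y) (hd : 2 ≤ d)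
    (hk : 1 ≤ k) (hδ : d ^ (1 - (k : ℤ)) ≤ δ) :
    4 * (k : ℝ) * y * log ((1 + δ) / (x + δ)) + (2 * (k : ℝ) - h - 1) * x
      ≤ 4 * (k : ℝ) ^ 2 * log d * y + 2 * k * x := by
  have hlog := log_div_add_le hx hd hk hδ
  have hcoef : 2 * (k : ℝ) - h - 1 ≤ 2 * k := by linarith [(h.cast_nonneg : (0 : ℝ) ≤ h)]
  calc _ ≤ 4 * (k : ℝ) * y * (k * log d) + 2 * k * x := by gcongr
    _ = _ := by ring

lemma sum_le_add_of_le_mul_add_mul {ι : Type*} (s : Finset ι) {f x y : ι → ℝ} {a b : ℝ}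
    (ha : 0 ≤ a) (hb : 0 ≤ b) (hf : ∀ i ∈ s, f i ≤ a * y i + b * x i)
    (hx1 : ∑ i ∈ s, x i ≤ 1) (hy1 : ∑ i ∈ s, y i ≤ 1) : ∑ i ∈ s, f i ≤ a + b :=
  calc ∑ i ∈ s, f i ≤ ∑ i ∈ s, (a * y i + b * x i) := sum_le_sum hf
    _ = a * ∑ i ∈ s, y i + b * ∑ i ∈ s, x i := by rw [sum_add_distrib, mul_sum, mul_sum]
    _ ≤ a * 1 + b * 1 := by gcongr
    _ = a + b := by ring

theorem stmt4_general
    (k j : ℕ) (hk : 1 ≤ k)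
    (ε : ℝ)
    (d : ℝ) (hd : 2 ≤ d)
    (q : ℕ)
    (h : ℕ)
    (δ : ℝ)
    (hδq : d ^ (1 - (k : ℤ)) ≤ δ / q)
    (wt : ℝ) (hwt0 : 0 ≤ wt) (hwt1 : wt ≤ ε * 2 ^ (1 - (j : ℤ)))
    (x y : Fin q → ℝ)
    (hx0 : ∀ i, 0 ≤ x i) (hy0 : ∀ i, 0 ≤ y i)
    (hx1 : ∑ i, x i ≤ 1) (hy1 : ∑ i, y i ≤ 1) :
    2 * ∑ i, wt * (4 * (k : ℝ) * y i * Real.log ((1 + δ / q) / (x i + δ / q))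
          + (2 * (k : ℝ) - (h : ℝ) - 1) * x i)
      ≤ ε * 2 ^ (2 - (j : ℤ)) * (2 * (k : ℝ) + 4 * (k : ℝ) ^ 2 * Real.log d) := by
  have hlogd : 0 ≤ log d := log_nonneg (by linarith)
  have hsum := sum_le_add_of_le_mul_add_mul univ (by positivity) (by positivity)
    (fun i _ ↦ leaf_term_le (h := h) (hx0 i) (hy0 i) hd hk hδq) hx1 hy1
  have h2j : (2 : ℝ) ^ (2 - (j : ℤ)) = 2 * 2 ^ (1 - (j : ℤ)) := by
    rw [show (2 : ℤ) - j = 1 + (1 - j) by ring, zpow_one_add₀ two_ne_zero]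
  calc 2 * ∑ i, wt * (4 * (k : ℝ) * y i * log ((1 + δ / q) / (x i + δ / q))
          + (2 * (k : ℝ) - h - 1) * x i)
      ≤ 2 * (wt * (4 * (k : ℝ) ^ 2 * log d + 2 * k)) := by
        rw [← mul_sum]; gcongr
    _ ≤ 2 * (ε * 2 ^ (1 - (j : ℤ)) * (4 * (k : ℝ) ^ 2 * log d + 2 * k)) := by gcongr
    _ = ε * 2 ^ (2 - (j : ℤ)) * (2 * (k : ℝ) + 4 * (k : ℝ) ^ 2 * log d) := by rw [h2j]; ring

/-- Fork-step bound, Lemma 6 of the paper: attaching `q ≥ 2` new leaves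
(with revised weight `w̃ ≤ ε·2^{1−j}` and shift parameter `δ/q ≥ d^{1−k}`) to a leaf of
combinatorial depth `h ≤ k−1` increases the potential by at most
`ε·2^{2−j}·(2k + 4k²·log d)`. -/
theorem stmt4
    (k j : ℕ) (hk : 1 ≤ k) (hj : 1 ≤ j)
    (ε : ℝ) (hε : 0 < ε)
    (d : ℝ) (hd : 2 ≤ d)
    (q : ℕ) (hq : 2 ≤ q)
    (h : ℕ) (hh : h + 1 ≤ k)
    (δ : ℝ) (hδ0 : 0 < δ) (hδ1 : δ ≤ 1)
    (hδq : d ^ (1 - (k : ℤ)) ≤ δ / q)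
    (wt : ℝ) (hwt0 : 0 ≤ wt) (hwt1 : wt ≤ ε * 2 ^ (1 - (j : ℤ)))
    (x y : Fin q → ℝ)
    (hx0 : ∀ i, 0 ≤ x i) (hy0 : ∀ i, 0 ≤ y i)
    (hx1 : ∑ i, x i ≤ 1) (hy1 : ∑ i, y i ≤ 1) :
    2 * ∑ i, wt * (4 * (k : ℝ) * y i * Real.log ((1 + δ / q) / (x i + δ / q))
          + (2 * (k : ℝ) - (h : ℝ) - 1) * x i)
      ≤ ε * 2 ^ (2 - (j : ℤ)) * (2 * (k : ℝ) + 4 * (k : ℝ) ^ 2 * Real.log d) :=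
  stmt4_general k j hk ε d hd q h δ hδq wt hwt0 hwt1 x y hx0 hy0 hx1 hy1
end

section
/- Let a finite rooted tree be given, and let K ⊆ ℝ^{V⁰} be the polytope K(T). Let x ∈ K satisfy x_u > 0 for every u ∈ V⁰. Then the normal cone N_K(x) := { μ ∈ ℝ^{V⁰} : Σ_{u∈V⁰} μ_u·(y_u − x_u) ≤ 0 for all y ∈ K } equals the set { μ ∈ ℝ^{V⁰} : there exists λ : V → ℝ with λ_u = 0 for every leaf u and μ_u = λ_u − λ_{p_u} for all u ∈ V⁰ }. -/
/-!
Write `⟨μ, w⟩ = ∑_{u ≠ r} μ_u w_u`. Differences of points of `K(T)` are flows vanishing at the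
root, and summation by parts along the parent map turns `⟨λ - λ ∘ p, w⟩` into
`∑_{ℓ leaf} λ_ℓ w_ℓ - λ_r w_r`; this gives the inclusion `⊇`.

Conversely, for `μ` in the normal cone let `g u` be the sum of `μ` along the path from `u` up to
the root, so that `μ_u = g u - g p_u`. The indicator `P_ℓ` of the root path of a leaf `ℓ` is a
point of `K(T)`, and since `x` is strictly positive, `x + t (P_ℓ - P_ℓ')` stays in `K(T)` for
small `t > 0`. Its pairing with `μ` is `t (g ℓ - g ℓ')`, so `g ℓ ≤ g ℓ'`: `g` is constant on the
leaves, and `λ` is `g` minus that constant.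
-/

open Finset Relation Filter Topology

namespace ParentMap

variable {V : Type*} (r : V) (p : V → V)

def ParentStep (v u : V) : Prop := v ≠ r ∧ p v = u

def IsLeaf (u : V) : Prop := u ≠ r ∧ ∀ v, v ≠ r → p v ≠ u

open Classical in
noncomputable def pathIndicator (u : V) : V → ℝ :=
  fun v => if ReflTransGen (ParentStep r p) u v then 1 else 0

lemma pathIndicator_nonneg (u v : V) : 0 ≤ pathIndicator r p u v := by
  unfold pathIndicator; split_ifs <;> norm_num

lemma pathIndicator_le_one (u v : V) : pathIndicator r p u v ≤ 1 := by
  unfold pathIndicator; split_ifs <;> norm_num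

section Depth

variable {r p} {dep : V → ℕ}

lemma parentStep_rightUnique : Relator.RightUnique (ParentStep r p) :=
  fun _ _ _ hb hc => hb.2.symm.trans hc.2

lemma ParentStep.dep_eq (hdep : ∀ u, u ≠ r → dep u = dep (p u) + 1) {a b : V}
    (h : ParentStep r p a b) : dep a = dep b + 1 :=
  h.2 ▸ hdep a h.1

lemma dep_le_of_reflTransGen (hdep : ∀ u, u ≠ r → dep u = dep (p u) + 1) {a b : V}
    (h : ReflTransGen (ParentStep r p) a b) : dep b ≤ dep a := by
  induction h with
  | refl => exact le_rfl
  | tail _ hbc ih => have := hbc.dep_eq hdep; omega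

lemma eq_of_reflTransGen_of_dep_le (hdep : ∀ u, u ≠ r → dep u = dep (p u) + 1) {a b : V}
    (h : ReflTransGen (ParentStep r p) a b) (hd : dep a ≤ dep b) : a = b := by
  rcases h.cases_head with rfl | ⟨c, hac, hcb⟩
  · rfl
  · have := hac.dep_eq hdep
    have := dep_le_of_reflTransGen hdep hcb
    omega

lemma reflTransGen_root (hdep : ∀ u, u ≠ r → dep u = dep (p u) + 1) (u : V) :
    ReflTransGen (ParentStep r p) u r := by
  by_cases hu : u = r
  · rw [hu]
  · exact .head ⟨hu, rfl⟩ (reflTransGen_root hdep (p u))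
termination_by dep u
decreasing_by have := hdep u hu; omega

lemma pathIndicator_root (hdep : ∀ u, u ≠ r → dep u = dep (p u) + 1) (u : V) :
    pathIndicator r p u r = 1 :=
  if_pos (reflTransGen_root hdep u)

lemma pathIndicator_eq_add_parent [DecidableEq V] (hdep : ∀ u, u ≠ r → dep u = dep (p u) + 1)
    {u : V} (hu : u ≠ r) (v : V) :
    pathIndicator r p u v = (if v = u then 1 else 0) + pathIndicator r p (p u) v := by
  by_cases hv : v = u
  · subst hv
    have hnot : ¬ReflTransGen (ParentStep r p) (p v) v := fun h =>
      absurd (dep_le_of_reflTransGen hdep h) (by have := hdep v hu; omega)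
    simp [pathIndicator, hnot, ReflTransGen.refl]
  · have hiff : ReflTransGen (ParentStep r p) u v ↔ ReflTransGen (ParentStep r p) (p u) v := by
      rw [ReflTransGen.cases_head_iff]
      simp [Ne.symm hv, ParentStep, hu]
    simp only [pathIndicator, if_neg hv, zero_add]
    split_ifs <;> simp_all

end Depth

variable [Fintype V] [DecidableEq V]

def children (u : V) : Finset V := univ.filter fun v => v ≠ r ∧ p v = u

def flowSpace : Submodule ℝ (V → ℝ) where
  carrier := {w | ∀ u, ¬IsLeaf r p u → ∑ v ∈ children r p u, w v = w u}
  add_mem' hw hw' u hu := by simp only [Pi.add_apply, sum_add_distrib, hw u hu, hw' u hu]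
  zero_mem' u _ := by simp
  smul_mem' c w hw u hu := by simp only [Pi.smul_apply, smul_eq_mul, ← mul_sum, hw u hu]

def treePolytope : Set (V → ℝ) :=
  {z | z r = 1 ∧ (∀ u, u ≠ r → 0 ≤ z u) ∧ z ∈ flowSpace r p}

noncomputable def potential (μ : V → ℝ) (u : V) : ℝ :=
  ∑ v ∈ univ.filter (· ≠ r), μ v * pathIndicator r p u v

variable {r p}

lemma mem_children {u v : V} : v ∈ children r p u ↔ ParentStep r p v u := by
  simp [children, ParentStep]

lemma pathIndicator_mem_flowSpace {dep : V → ℕ} (hdep : ∀ u, u ≠ r → dep u = dep (p u) + 1)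
    {ℓ : V} (hℓ : IsLeaf r p ℓ) : pathIndicator r p ℓ ∈ flowSpace r p := by
  intro u hu
  by_cases hℓu : ReflTransGen (ParentStep r p) ℓ u
  · obtain ⟨c, hℓc, hcu⟩ : ∃ c, ReflTransGen (ParentStep r p) ℓ c ∧ ParentStep r p c u := by
      rcases hℓu.cases_tail with rfl | h
      · exact absurd hℓ hu
      · exact h
    rw [sum_eq_single_of_mem c (mem_children.2 hcu)]
    · simp only [pathIndicator, if_pos hℓc, if_pos hℓu]
    intro v hv hvc
    have hvu := mem_children.1 hv
    have hdep_vc : dep v = dep c := by rw [hvu.dep_eq hdep, hcu.dep_eq hdep]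
    refine if_neg fun hℓv => hvc ?_
    -- `ℓ` has a unique ancestor at each depth
    rcases hℓv.total_of_right_unique parentStep_rightUnique hℓc with h | h
    · exact eq_of_reflTransGen_of_dep_le hdep h hdep_vc.le
    · exact (eq_of_reflTransGen_of_dep_le hdep h hdep_vc.ge).symm
  · rw [pathIndicator, if_neg hℓu]
    exact sum_eq_zero fun v hv => if_neg fun hℓv => hℓu (hℓv.tail (mem_children.1 hv))

lemma potential_sub_potential_parent {dep : V → ℕ}
    (hdep : ∀ u, u ≠ r → dep u = dep (p u) + 1) (μ : V → ℝ) {u : V} (hu : u ≠ r) :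
    potential r p μ u - potential r p μ (p u) = μ u := by
  simp [potential, pathIndicator_eq_add_parent hdep hu, mul_add, sum_add_distrib, hu]

lemma sum_sub_parent_mul_eq {lam w : V → ℝ} (hw : w ∈ flowSpace r p)
    (hlam : ∀ u, IsLeaf r p u → lam u = 0) :
    ∑ u ∈ univ.filter (· ≠ r), (lam u - lam (p u)) * w u = -(lam r * w r) := by
  have hchildren : ∀ a, lam a * ∑ v ∈ children r p a, w v = lam a * w a := fun a => by
    by_cases ha : IsLeaf r p a
    · simp [hlam a ha]
    · rw [hw a ha]
  have hparent : ∑ u ∈ univ.filter (· ≠ r), lam (p u) * w u = ∑ a, lam a * w a := by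
    rw [← sum_fiberwise_of_maps_to (g := p) (fun u _ => mem_univ (p u))]
    refine sum_congr rfl fun a _ => ?_
    rw [← hchildren a, mul_sum, children, filter_filter]
    exact sum_congr rfl fun u hu => by rw [(mem_filter.1 hu).2.2]
  have hself : ∑ u ∈ univ.filter (· ≠ r), lam u * w u = ∑ a, lam a * w a - lam r * w r := by
    rw [filter_ne', sum_erase_eq_sub (mem_univ r)]
  simp only [sub_mul, sum_sub_distrib, hparent, hself]
  ring

lemma sum_mul_sub_eq_zero {x y lam μ : V → ℝ} (hx : x ∈ treePolytope r p)
    (hy : y ∈ treePolytope r p) (hlam : ∀ u, IsLeaf r p u → lam u = 0)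
    (hμ : ∀ u, u ≠ r → μ u = lam u - lam (p u)) :
    ∑ u ∈ univ.filter (· ≠ r), μ u * (y u - x u) = 0 := by
  have hμ' : ∀ u ∈ univ.filter (· ≠ r), μ u * (y u - x u) = (lam u - lam (p u)) * (y - x) u :=
    fun u hu => by rw [hμ u (mem_filter.1 hu).2, Pi.sub_apply]
  rw [sum_congr rfl hμ', sum_sub_parent_mul_eq (sub_mem hy.2.2 hx.2.2) hlam, Pi.sub_apply,
    hy.1, hx.1, sub_self, mul_zero, neg_zero]

lemma exists_pos_forall_le {ι : Type*} [Finite ι] {s : Set ι} {x : ι → ℝ}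
    (hx : ∀ i ∈ s, 0 < x i) : ∃ t > 0, ∀ i ∈ s, t ≤ x i := by
  have h : ∀ᶠ t in 𝓝[>] (0 : ℝ), ∀ i ∈ s, t ≤ x i :=
    eventually_all.2 fun i => by
      by_cases hi : i ∈ s
      · filter_upwards [nhdsWithin_le_nhds (eventually_le_nhds (hx i hi))] with t ht using
          fun _ => ht
      · exact Eventually.of_forall fun _ h => absurd h hi
  exact (h.and self_mem_nhdsWithin).exists.imp fun t ht => ⟨ht.2, ht.1⟩

lemma potential_le_of_isLeaf {dep : V → ℕ} (hdep : ∀ u, u ≠ r → dep u = dep (p u) + 1)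
    {x μ : V → ℝ} (hx : x ∈ treePolytope r p) (hxpos : ∀ u, u ≠ r → 0 < x u)
    (hN : ∀ y ∈ treePolytope r p, ∑ u ∈ univ.filter (· ≠ r), μ u * (y u - x u) ≤ 0)
    {ℓ ℓ' : V} (hℓ : IsLeaf r p ℓ) (hℓ' : IsLeaf r p ℓ') :
    potential r p μ ℓ ≤ potential r p μ ℓ' := by
  obtain ⟨t, ht, htx⟩ := exists_pos_forall_le (s := {u | u ≠ r}) hxpos
  set w := pathIndicator r p ℓ - pathIndicator r p ℓ'
  have hy : x + t • w ∈ treePolytope r p := by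
    refine ⟨?_, fun u hu => ?_, ?_⟩
    · simp [w, hx.1, pathIndicator_root hdep]
    · have := pathIndicator_nonneg r p ℓ u
      have := pathIndicator_le_one r p ℓ' u
      have := htx u hu
      simp only [w, Pi.add_apply, Pi.smul_apply, Pi.sub_apply, smul_eq_mul]
      nlinarith
    · exact add_mem hx.2.2 (Submodule.smul_mem _ _ (sub_mem
        (pathIndicator_mem_flowSpace hdep hℓ) (pathIndicator_mem_flowSpace hdep hℓ')))
  have hpair : ∑ u ∈ univ.filter (· ≠ r), μ u * ((x + t • w) u - x u)
      = t * (potential r p μ ℓ - potential r p μ ℓ') := by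
    simp only [potential, mul_sub, mul_sum, ← sum_sub_distrib]
    refine sum_congr rfl fun u _ => ?_
    simp only [w, Pi.add_apply, Pi.smul_apply, Pi.sub_apply, smul_eq_mul]
    ring
  have hpair_nonpos := hN _ hy
  rw [hpair] at hpair_nonpos
  exact sub_nonpos.1 (nonpos_of_mul_nonpos_right hpair_nonpos ht)

lemma exists_potential_of_normal {dep : V → ℕ} (hdep : ∀ u, u ≠ r → dep u = dep (p u) + 1)
    {x μ : V → ℝ} (hx : x ∈ treePolytope r p) (hxpos : ∀ u, u ≠ r → 0 < x u)
    (hN : ∀ y ∈ treePolytope r p, ∑ u ∈ univ.filter (· ≠ r), μ u * (y u - x u) ≤ 0) :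
    ∃ lam : V → ℝ, (∀ u, IsLeaf r p u → lam u = 0) ∧ ∀ u, u ≠ r → μ u = lam u - lam (p u) := by
  obtain ⟨c, hc⟩ : ∃ c, ∀ ℓ, IsLeaf r p ℓ → potential r p μ ℓ = c := by
    by_cases h : ∃ ℓ₀, IsLeaf r p ℓ₀
    · obtain ⟨ℓ₀, h₀⟩ := h
      exact ⟨_, fun ℓ hℓ => (potential_le_of_isLeaf hdep hx hxpos hN hℓ h₀).antisymm
        (potential_le_of_isLeaf hdep hx hxpos hN h₀ hℓ)⟩
    · exact ⟨0, fun ℓ hℓ => absurd ⟨ℓ, hℓ⟩ h⟩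
  refine ⟨fun u => potential r p μ u - c, fun u hu => sub_eq_zero.2 (hc u hu), fun u hu => ?_⟩
  rw [← potential_sub_potential_parent hdep μ hu]
  ring

end ParentMap

theorem stmt8_general
    {V : Type*} [Fintype V] [DecidableEq V]
    (r : V) (p : V → V) (dep : V → ℕ)
    (hdep : ∀ u, u ≠ r → dep u = dep (p u) + 1)
    (K : Set (V → ℝ))
    (hK : K = {z : V → ℝ | z r = 1 ∧ (∀ u, u ≠ r → 0 ≤ z u) ∧
      ∀ u, ¬(u ≠ r ∧ ∀ v, v ≠ r → p v ≠ u) →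
        ∑ v ∈ univ.filter (fun v => v ≠ r ∧ p v = u), z v = z u})
    (x : V → ℝ) (hx : x ∈ K) (hxpos : ∀ u, u ≠ r → 0 < x u) :
    {μ : V → ℝ | ∀ y ∈ K,
        ∑ u ∈ univ.filter (fun u => u ≠ r), μ u * (y u - x u) ≤ 0}
      = {μ : V → ℝ | ∃ lam : V → ℝ,
          (∀ u, (u ≠ r ∧ ∀ v, v ≠ r → p v ≠ u) → lam u = 0) ∧
          ∀ u, u ≠ r → μ u = lam u - lam (p u)} := by
  have hK' : K = ParentMap.treePolytope r p := hK
  subst hK'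
  ext μ
  exact ⟨ParentMap.exists_potential_of_normal hdep hx hxpos,
    fun ⟨_, hlam, hμ⟩ y hy => (ParentMap.sum_mul_sub_eq_zero hx hy hlam hμ).le⟩

/-- structure of the normal cone of `K(T)` at a strictly positive point:
if `x ∈ K(T)` has `x_u > 0` for all `u ∈ V⁰`, then
`N_K(x) = { μ : ∃ λ with λ = 0 on leaves and μ_u = λ_u − λ_{p_u} on V⁰ }`. -/
theorem stmt8
    {V : Type*} [Fintype V] [DecidableEq V]
    (r : V) (p : V → V) (dep : V → ℕ)
    (hdep_r : dep r = 0)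
    (hdep : ∀ u, u ≠ r → dep u = dep (p u) + 1)
    (cr : V) (hcr : ∀ v, (v ≠ r ∧ p v = r) ↔ v = cr)
    (K : Set (V → ℝ))
    (hK : K = {z : V → ℝ | z r = 1 ∧ (∀ u, u ≠ r → 0 ≤ z u) ∧
      ∀ u, ¬(u ≠ r ∧ ∀ v, v ≠ r → p v ≠ u) →
        ∑ v ∈ univ.filter (fun v => v ≠ r ∧ p v = u), z v = z u})
    (x : V → ℝ) (hx : x ∈ K) (hxpos : ∀ u, u ≠ r → 0 < x u) :
    {μ : V → ℝ | ∀ y ∈ K,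
        ∑ u ∈ univ.filter (fun u => u ≠ r), μ u * (y u - x u) ≤ 0}
      = {μ : V → ℝ | ∃ lam : V → ℝ,
          (∀ u, (u ≠ r ∧ ∀ v, v ≠ r → p v ≠ u) → lam u = 0) ∧
          ∀ u, u ≠ r → μ u = lam u - lam (p u)} :=
  stmt8_general r p dep hdep K hK x hx hxpos
end

section
/- Let n ≥ 1, let K ⊆ ℝⁿ be convex, and let Φ : ℝⁿ → ℝ be differentiable with differentiable gradient. Let y ∈ K, let t₀ ∈ ℝ, and let x : ℝ → ℝⁿ be differentiable at t₀ with x(t₀) ∈ K. Suppose there exist f, μ ∈ ℝⁿ such that ⟨μ, z − x(t₀)⟩ ≤ 0 for all z ∈ K and ∇²Φ(x(t₀))·x'(t₀) = f − μ, where ∇²Φ(x(t₀)) denotes the derivative of the gradient map ∇Φ at x(t₀). Then the Bregman divergence t ↦ D(t) := Φ(y) − Φ(x(t)) + ⟨∇Φ(x(t)), x(t) − y⟩ is differentiable at t₀ with D'(t₀) = ⟨∇²Φ(x(t₀))·x'(t₀), x(t₀) − y⟩, and consequently D'(t₀) ≤ ⟨f, x(t₀) − y⟩. -/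
open scoped RealInnerProductSpace

/-- if `x` solves the mirror descent inclusion at time `t₀`, i.e.
`∇²Φ(x(t₀))·x'(t₀) = f − μ` with `μ` in the normal cone of `K` at `x(t₀)`, then the
Bregman divergence `D(t) = Φ(y) − Φ(x(t)) + ⟨∇Φ(x(t)), x(t) − y⟩` is differentiable at
`t₀` with `D'(t₀) = ⟨∇²Φ(x(t₀))·x'(t₀), x(t₀) − y⟩ ≤ ⟨f, x(t₀) − y⟩`. -/
theorem stmt10
    (n : ℕ) (hn : 1 ≤ n)
    (K : Set (EuclideanSpace ℝ (Fin n))) (hKconv : Convex ℝ K)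
    (Φ : EuclideanSpace ℝ (Fin n) → ℝ)
    -- G is the gradient map ∇Φ (Φ is differentiable with differentiable gradient)
    (G : EuclideanSpace ℝ (Fin n) → EuclideanSpace ℝ (Fin n))
    (hG : ∀ z, HasGradientAt Φ (G z) z)
    (y : EuclideanSpace ℝ (Fin n)) (hy : y ∈ K)
    (t₀ : ℝ)
    (x : ℝ → EuclideanSpace ℝ (Fin n))
    (x' : EuclideanSpace ℝ (Fin n)) (hx : HasDerivAt x x' t₀)
    (hxK : x t₀ ∈ K)
    -- H = ∇²Φ(x(t₀)) is the derivative of the gradient map ∇Φ at x(t₀)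
    (H : EuclideanSpace ℝ (Fin n) →L[ℝ] EuclideanSpace ℝ (Fin n))
    (hH : HasFDerivAt G H (x t₀))
    (f μ : EuclideanSpace ℝ (Fin n))
    (hμ : ∀ z ∈ K, ⟪μ, z - x t₀⟫ ≤ 0)
    (heq : H x' = f - μ) :
    HasDerivAt (fun t => Φ y - Φ (x t) + ⟪G (x t), x t - y⟫)
        ⟪H x', x t₀ - y⟫ t₀
      ∧ ⟪H x', x t₀ - y⟫ ≤ ⟪f, x t₀ - y⟫ := by
  constructor
  · have h1 : HasDerivAt (fun t => Φ (x t)) ⟪G (x t₀), x'⟫ t₀ := by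
      have := (hG (x t₀)).hasFDerivAt.comp_hasDerivAt t₀ hx
      simp at this; exact this
    have h2 : HasDerivAt (fun t => G (x t)) (H x') t₀ :=
      hH.comp_hasDerivAt t₀ hx
    have h3 : HasDerivAt (fun t => x t - y) x' t₀ := by
      simpa using hx.sub_const y
    have h4 : HasDerivAt (fun t => ⟪G (x t), x t - y⟫)
        (⟪G (x t₀), x'⟫ + ⟪H x', x t₀ - y⟫) t₀ := h2.inner ℝ h3
    have h5 := (h1.const_sub (Φ y)).add h4
    exact h5.congr_deriv (by ring)
  · have hμy : ⟪μ, y - x t₀⟫ ≤ 0 := hμ y hy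
    rw [heq, inner_sub_left]
    have : (0:ℝ) ≤ ⟪μ, x t₀ - y⟫ := by
      have h : ⟪μ, y - x t₀⟫ = -⟪μ, x t₀ - y⟫ := by rw [← inner_neg_right]; congr 1; abel
      linarith [h ▸ hμy]
    linarith
end
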